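/- For circular Nim CN(6,3) (six stacks in a circle, each move removes at least one token total from three consecutive stacks), the set of P-positions is exactly {(a,b,c,d,e,f) : a+b = d+e and b+c = e+f}. -/

import Mathlib

/-- A legal move in SetNim: at least one stack strictly decreases, all changed
stacks lie in some allowed move set, stacks weakly decrease. -/
def Move {V : Type} (A : Set (Set V)) (p q : V → ℕ) : Prop :=
  q ≠ p ∧ (∀ i, q i ≤ p i) ∧ ∃ a ∈ A, ∀ i, q i ≠ p i → i ∈ a

/-- P-positions: positions all of whose options are N-positions. -/
def PPos {V : Type} [Fintype V] (A : Set (Set V)) (p : V → ℕ) : Prop :=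
  ∀ q, Move A p q → ¬ PPos A q
termination_by Finset.univ.sum p
decreasing_by
  rename_i hq
  obtain ⟨hne, hle, -⟩ := hq
  refine Finset.sum_lt_sum (fun i _ => hle i) ?_
  obtain ⟨i, hi⟩ := Function.ne_iff.mp hne
  exact ⟨i, Finset.mem_univ i, lt_of_le_of_ne (hle i) hi⟩


/-- Move sets of circular Nim CN(6,3): three consecutive stacks. -/
def CN63 : Set (Set (Fin 6)) := {s | ∃ i : Fin 6, s = {i, i + 1, i + 2}}

/-! Call a position balanced if `p 0 + p 1 = p 3 + p 4` and `p 1 + p 2 = p 4 + p 5`; together these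
imply `p 2 + p 3 = p 5 + p 0`, so balance is invariant under rotating the circle, and by symmetry
only moves on stacks `0, 1, 2` need to be analysed. Such a move fixes stacks `3, 4, 5`; from a
balanced position it would have to keep `p 0 + p 1` and `p 1 + p 2` while lowering some stack,
which is impossible. From any position, on the other hand, some rotation admits a move on stacks
`0, 1, 2` that lowers both sums to their targets. So the balanced positions form the kernel
of the game graph (no move stays inside, and every position outside has a move into it), and
the kernel of a well-founded game is its set of P-positions. -/

section SetNim

variable {V : Type}

theorem Move.sum_lt_sum [Fintype V] {A : Set (Set V)} {p q : V → ℕ} (h : Move A p q) :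
    ∑ i, q i < ∑ i, p i := by
  obtain ⟨hne, hle, -⟩ := h
  obtain ⟨i, hi⟩ := Function.ne_iff.mp hne
  exact Finset.sum_lt_sum (fun i _ => hle i) ⟨i, Finset.mem_univ i, lt_of_le_of_ne (hle i) hi⟩

theorem pPos_iff_of_kernel [Fintype V] {A : Set (Set V)} (S : (V → ℕ) → Prop)
    (hstable : ∀ p q, S p → Move A p q → ¬ S q)
    (habsorb : ∀ p, ¬ S p → ∃ q, Move A p q ∧ S q) (p : V → ℕ) :
    PPos A p ↔ S p := by
  induction hn : ∑ i, p i using Nat.strong_induction_on generalizing p with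
  | _ n ih =>
    have ih' : ∀ q, Move A p q → (PPos A q ↔ S q) := fun q hq =>
      ih _ (hn ▸ hq.sum_lt_sum) q rfl
    rw [PPos]
    constructor
    · intro hP
      by_contra hS
      obtain ⟨q, hq, hSq⟩ := habsorb p hS
      exact hP q hq ((ih' q hq).2 hSq)
    · intro hS q hq hPq
      exact hstable p q hS hq ((ih' q hq).1 hPq)

theorem move_iff_exists_move_singleton {A : Set (Set V)} {p q : V → ℕ} :
    Move A p q ↔ ∃ a ∈ A, Move {a} p q := by
  constructor
  · rintro ⟨hne, hle, a, ha, hout⟩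
    exact ⟨a, ha, hne, hle, a, rfl, hout⟩
  · rintro ⟨a, ha, hne, hle, _, rfl, hout⟩
    exact ⟨hne, hle, _, ha, hout⟩

theorem move_singleton_comp_equiv_iff (σ : V ≃ V) {a : Set V} {p q : V → ℕ} :
    Move {σ ⁻¹' a} (p ∘ σ) (q ∘ σ) ↔ Move {a} p q := by
  simp only [Move, Set.mem_singleton_iff, exists_eq_left, Function.comp_apply, Set.mem_preimage,
    σ.surjective.injective_comp_right.ne_iff]
  rw [σ.surjective.forall (p := fun i => q i ≤ p i),
    σ.surjective.forall (p := fun i => q i ≠ p i → i ∈ a)]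

end SetNim

theorem preimage_add_right_triple {G : Type*} [AddCommGroup G] (k a b : G) :
    (· + k) ⁻¹' {k, k + a, k + b} = ({0, a, b} : Set G) := by
  ext x
  simp [add_comm x k]

theorem exists_triple_le_add_eq_add_eq {a b c u v : ℕ} (hu : u ≤ a + b) (hv : v ≤ b + c)
    (hua : u ≤ a + v) (hvc : v ≤ c + u) :
    ∃ a' ≤ a, ∃ b' ≤ b, ∃ c' ≤ c, a' + b' = u ∧ b' + c' = v :=
  ⟨u - min b (min u v), by omega, min b (min u v), by omega, v - min b (min u v), by omega,
    by omega, by omega⟩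

namespace CN63

theorem move_iff {p q : Fin 6 → ℕ} :
    Move CN63 p q ↔ ∃ k, Move {{0, 1, 2}} (fun j => p (j + k)) (fun j => q (j + k)) := by
  rw [move_iff_exists_move_singleton]
  constructor
  · rintro ⟨_, ⟨k, rfl⟩, h⟩
    refine ⟨k, ?_⟩
    rw [← preimage_add_right_triple k 1 2]
    exact (move_singleton_comp_equiv_iff (Equiv.addRight k)).2 h
  · rintro ⟨k, h⟩
    refine ⟨_, ⟨k, rfl⟩, ?_⟩
    rw [← preimage_add_right_triple k 1 2] at h
    exact (move_singleton_comp_equiv_iff (Equiv.addRight k)).1 h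

def Balanced (p : Fin 6 → ℕ) : Prop :=
  p 0 + p 1 = p 3 + p 4 ∧ p 1 + p 2 = p 4 + p 5

theorem Balanced.rotate {p : Fin 6 → ℕ} (hp : Balanced p) (k : Fin 6) :
    Balanced (fun j => p (j + k)) := by
  unfold Balanced at *
  fin_cases k <;>
    simp only [Fin.zero_eta, Fin.mk_one, Fin.reduceFinMk, Fin.isValue, Fin.reduceAdd, add_zero,
      zero_add] <;>
    omega

theorem not_balanced_of_move_zero {r s : Fin 6 → ℕ} (hr : Balanced r)
    (h : Move {{0, 1, 2}} r s) : ¬ Balanced s := by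
  rintro ⟨hs01, hs12⟩
  obtain ⟨hne, hle, _, rfl, hout⟩ := h
  have hfix : ∀ j, j ∉ ({0, 1, 2} : Set (Fin 6)) → s j = r j :=
    fun j => not_imp_comm.1 (hout j)
  have h3 := hfix 3 (by simp)
  have h4 := hfix 4 (by simp)
  have h5 := hfix 5 (by simp)
  have h0 := hle 0
  have h1 := hle 1
  have h2 := hle 2
  obtain ⟨hr01, hr12⟩ := hr
  apply hne
  funext j
  fin_cases j <;> simp only [Fin.zero_eta, Fin.mk_one, Fin.reduceFinMk, Fin.isValue] <;> omega

/-- The hypotheses of `exists_triple_le_add_eq_add_eq` for lowering stacks `0, 1, 2` to the pair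
sums `r 3 + r 4` and `r 4 + r 5`. -/
def BalanceableAtZero (r : Fin 6 → ℕ) : Prop :=
  r 3 + r 4 ≤ r 0 + r 1 ∧ r 4 + r 5 ≤ r 1 + r 2 ∧
    r 3 + r 4 ≤ r 0 + (r 4 + r 5) ∧ r 4 + r 5 ≤ r 2 + (r 3 + r 4)

theorem exists_move_zero_to_balanced {r : Fin 6 → ℕ} (hr : BalanceableAtZero r)
    (hunbal : ¬ Balanced r) : ∃ s, Move {{0, 1, 2}} r s ∧ Balanced s := by
  obtain ⟨hu, hv, hua, hvc⟩ := hr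
  obtain ⟨a, ha, b, hb, c, hc, hab, hbc⟩ := exists_triple_le_add_eq_add_eq hu hv hua hvc
  have hbal : Balanced ![a, b, c, r 3, r 4, r 5] := ⟨hab, hbc⟩
  refine ⟨_, ⟨fun h => hunbal (h ▸ hbal), fun j => ?_, _, rfl, fun j hj => ?_⟩, hbal⟩
  · fin_cases j <;> simp [ha, hb, hc]
  · fin_cases j <;> simp_all

theorem exists_rotate_balanceableAtZero (p : Fin 6 → ℕ) :
    ∃ k, BalanceableAtZero (fun j => p (j + k)) := by
  by_contra! hk
  have h0 := hk 0
  have h1 := hk 1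
  have h2 := hk 2
  have h3 := hk 3
  have h4 := hk 4
  have h5 := hk 5
  simp only [BalanceableAtZero, Fin.isValue, Fin.reduceAdd, add_zero, zero_add, not_and,
    not_le] at h0 h1 h2 h3 h4 h5
  omega

theorem not_balanced_of_move {p q : Fin 6 → ℕ} (hp : Balanced p) (h : Move CN63 p q) :
    ¬ Balanced q := by
  obtain ⟨k, hk⟩ := move_iff.1 h
  exact fun hq => not_balanced_of_move_zero (hp.rotate k) hk (hq.rotate k)

theorem exists_move_to_balanced {p : Fin 6 → ℕ} (hp : ¬ Balanced p) :
    ∃ q, Move CN63 p q ∧ Balanced q := by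
  obtain ⟨k, hk⟩ := exists_rotate_balanceableAtZero p
  have hpk : ¬ Balanced (fun j => p (j + k)) := fun h => hp (by simpa using h.rotate (-k))
  obtain ⟨s, hs, hbal⟩ := exists_move_zero_to_balanced hk hpk
  exact ⟨fun j => s (j - k), move_iff.2 ⟨k, by simpa using hs⟩,
    by simpa [sub_eq_add_neg] using hbal.rotate (-k)⟩

end CN63

open CN63 in
theorem cn63_ppos (p : Fin 6 → ℕ) :
    PPos CN63 p ↔ p 0 + p 1 = p 3 + p 4 ∧ p 1 + p 2 = p 4 + p 5 :=
  pPos_iff_of_kernel Balanced (fun _ _ => not_balanced_of_move)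
    (fun _ => exists_move_to_balanced) p
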